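/- Let A ∈ ℂ^{n×n} be nonsingular and completely pivoted with pivots p_1,...,p_n. Then p_1 / (∏_{k=1}^n p_k)^{1/n} ≤ 2·n^{(ln n)/4}; that is, the geometric mean over k of the ratios p_1/p_k is at most 2·n^{(ln n)/4}. -/

import Mathlib

open Matrix BigOperators

/-- The Gaussian elimination iterate `A^(k)`: the Schur complement of the
leading `(n-k) × (n-k)` block of `A`. -/
noncomputable def geIter (n : ℕ) (A : Matrix (Fin n) (Fin n) ℂ) (k : ℕ) (hk : k ≤ n) :
    Matrix (Fin k) (Fin k) ℂ :=
  let f : Fin k → Fin n := fun i => ⟨n - k + i.val, by have := i.isLt; omega⟩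
  let g : Fin (n - k) → Fin n := fun j => ⟨j.val, by have := j.isLt; omega⟩
  A.submatrix f f - A.submatrix f g * (A.submatrix g g)⁻¹ * A.submatrix g f

/-- The `k`-th pivot `p_k = |(A^(k))_{1,1}|` (and `0` if `k = 0` or `k > n`). -/
noncomputable def pivot (n : ℕ) (A : Matrix (Fin n) (Fin n) ℂ) (k : ℕ) : ℝ :=
  if h : 0 < k ∧ k ≤ n then ‖geIter n A k h.2 ⟨0, h.1⟩ ⟨0, h.1⟩‖ else 0

/-- `‖M‖_max`, the maximum modulus of an entry of `M`. -/
noncomputable def maxEntry {k : ℕ} (M : Matrix (Fin k) (Fin k) ℂ) : ℝ :=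
  ⨆ i : Fin k, ⨆ j : Fin k, ‖M i j‖

/-- `A` is completely pivoted: for every `k = 1, ..., n`, the pivot `p_k`
equals the maximum modulus of an entry of `A^(k)`. -/
def CompletelyPivoted (n : ℕ) (A : Matrix (Fin n) (Fin n) ℂ) : Prop :=
  ∀ (k : ℕ) (h1 : 0 < k) (h2 : k ≤ n), pivot n A k = maxEntry (geIter n A k h2)

/-- All leading principal minors of `A` are nonzero (with `m = n` this says
`A` itself is nonsingular). -/
def LeadingMinorsNonzero (n : ℕ) (A : Matrix (Fin n) (Fin n) ℂ) : Prop :=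
  ∀ (m : ℕ) (hm : m ≤ n), (A.submatrix (Fin.castLE hm) (Fin.castLE hm)).det ≠ 0

/-!
Schur complements multiply leading minors, so `p_1 ⋯ p_k = |det A^(k)|`. Every entry of
`A^(k)` has modulus at most `p_k`, so Hadamard's inequality (obtained here from AM-GM applied to
the eigenvalues of `A^(k) A^(k)ᴴ`) gives `p_1 ⋯ p_k ≤ k^(k/2) p_k^k`. Writing `L_k = log p_k`, these
`n` inequalities telescope (Wilkinson's argument) into
`n L_1 - ∑ L_k ≤ (n/2) ∑_{k=2}^n log k / (k - 1)`, and comparing the last sum with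
`∫ log t / t dt = (log t)^2 / 2` bounds it by `2 log 2 + (log n)^2 / 2`.
-/

open Finset Real

lemma two_div_le_log_add_one_sub_log {x : ℝ} (hx : 0 < x) :
    2 / (2 * x + 1) ≤ log (x + 1) - log x := by
  have h := le_hasSum (hasSum_log_one_add_inv hx) 0 fun _ _ => by positivity
  have hlog : log (1 + x⁻¹) = log (x + 1) - log x := by
    rw [← log_div (by positivity) hx.ne']
    congr 1
    field_simp
  rw [← hlog]
  simpa [div_eq_mul_inv] using h

lemma log_add_one_sub_log_le_inv {x : ℝ} (hx : 0 < x) : log (x + 1) - log x ≤ x⁻¹ := by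
  have h := log_le_sub_one_of_pos (show 0 < (x + 1) / x by positivity)
  rwa [log_div (by positivity) hx.ne', add_div, div_self hx.ne', one_div, add_sub_cancel_left] at h

/-- The correction terms `(log x + 3) / (2 x)` are what make the comparison of
`log (x + 1) / x` with `((log (x + 1))^2 - (log x)^2) / 2` close under induction. -/
lemma log_add_one_div_le {x : ℝ} (hx : 2 ≤ x) :
    log (x + 1) / x ≤ (log (x + 1) ^ 2 - log x ^ 2) / 2
      + (log x + 3) / (2 * x) - (log (x + 1) + 3) / (2 * (x + 1)) := by
  have hx0 : 0 < x := by linarith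
  set a := log x
  set b := log (x + 1)
  have ha : 0 ≤ a := log_nonneg (by linarith)
  have ha' : a ≤ x - 1 := log_le_sub_one_of_pos hx0
  have hlow : 2 ≤ (b - a) * (2 * x + 1) := by
    have := two_div_le_log_add_one_sub_log hx0
    rwa [div_le_iff₀ (by positivity)] at this
  have hup : x * (b - a) ≤ 1 := by
    have := mul_le_mul_of_nonneg_left (log_add_one_sub_log_le_inv hx0) hx0.le
    rwa [mul_inv_cancel₀ hx0.ne'] at this
  have hsq : (b + a) / (2 * x + 1) ≤ (b ^ 2 - a ^ 2) / 2 := by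
    rw [div_le_div_iff₀ (by positivity) two_pos]
    nlinarith
  have hrest : b / x ≤ (b + a) / (2 * x + 1) + (a + 3) / (2 * x) - (b + 3) / (2 * (x + 1)) := by
    rw [← sub_nonneg]
    have hfrac : (b + a) / (2 * x + 1) + (a + 3) / (2 * x) - (b + 3) / (2 * (x + 1)) - b / x
        = ((4 * x ^ 2 + 5 * x + 1) * (x * a) + (6 * x + 3) * x - (4 * x ^ 2 + 5 * x + 2) * (x * b))
          / (2 * x * x * (x + 1) * (2 * x + 1)) := by
      field_simp
      ring
    rw [hfrac]
    apply div_nonneg _ (by positivity)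
    nlinarith
  linarith

lemma sum_log_div_sub_one_add_le {n : ℕ} (hn : 2 ≤ n) :
    ∑ k ∈ Icc 2 n, log k / (k - 1) + (log n + 3) / (2 * n) ≤ 2 * log 2 + log n ^ 2 / 2 := by
  induction n, hn using Nat.le_induction with
  | base =>
    rw [Icc_self, sum_singleton, Nat.cast_ofNat]
    nlinarith [log_two_gt_d9, log_two_lt_d9]
  | succ n hn ih =>
    rw [sum_Icc_succ_top (by omega), Nat.cast_add_one, add_sub_cancel_right]
    have := log_add_one_div_le (x := n) (by exact_mod_cast hn)
    linarith

lemma sum_log_div_sub_one_le (n : ℕ) :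
    ∑ k ∈ Icc 2 n, log k / (k - 1) ≤ 2 * log 2 + log n ^ 2 / 2 := by
  rcases lt_or_ge n 2 with hn | hn
  · rw [Icc_eq_empty (by omega), sum_empty]
    positivity
  · have := sum_log_div_sub_one_add_le hn
    have : 0 ≤ (log n + 3) / (2 * n) := by positivity
    linarith

lemma two_mul_sub_sum_le_mul_sum_log_div {L : ℕ → ℝ} {n : ℕ}
    (hL : ∀ k ∈ Icc 1 n, 2 * ∑ j ∈ Icc 1 k, L j ≤ k * log k + 2 * k * L k) :
    2 * (n * L 1 - ∑ j ∈ Icc 1 n, L j) ≤ n * ∑ k ∈ Icc 2 n, log k / (k - 1) := by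
  induction n with
  | zero => simp
  | succ n ih =>
    rcases Nat.eq_zero_or_pos n with rfl | hn
    · simp
    have ih := ih fun k hk => hL k (Icc_subset_Icc_right n.le_succ hk)
    have hlast := hL (n + 1) (by simp)
    rw [sum_Icc_succ_top (by omega)] at hlast ⊢
    rw [sum_Icc_succ_top (by omega)]
    push_cast at hlast ⊢
    rw [add_sub_cancel_right]
    have hn' : (0 : ℝ) < n := by exact_mod_cast hn
    refine le_of_mul_le_mul_left ?_ hn'
    have hdiv : (n : ℝ) * (log (n + 1) / n) = log (n + 1) := mul_div_cancel₀ _ hn'.ne'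
    nlinarith [mul_le_mul_of_nonneg_left ih (by positivity : (0 : ℝ) ≤ n + 1)]

lemma div_prod_rpow_le_exp {ι : Type*} {s : Finset ι} (hs : s.Nonempty) {p : ι → ℝ}
    (hp : ∀ i ∈ s, 0 < p i) {a c : ℝ} (ha : 0 < a)
    (h : #s * log a - ∑ i ∈ s, log (p i) ≤ #s * c) :
    a / (∏ i ∈ s, p i) ^ ((1 : ℝ) / #s) ≤ exp c := by
  have hP : 0 < (∏ i ∈ s, p i) ^ ((1 : ℝ) / #s) := rpow_pos_of_pos (prod_pos hp) _
  have hs' : (0 : ℝ) < #s := by exact_mod_cast hs.card_pos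
  rw [← log_le_iff_le_exp (div_pos ha hP), log_div ha.ne' hP.ne', log_rpow (prod_pos hp),
    log_prod fun i hi => (hp i hi).ne', one_div_mul_eq_div, sub_div' hs'.ne',
    div_le_iff₀ hs']
  linarith

lemma prod_le_sum_div_card_pow {ι : Type*} [Fintype ι] {z : ι → ℝ} (hz : ∀ i, 0 ≤ z i) :
    ∏ i, z i ≤ ((∑ i, z i) / Fintype.card ι) ^ Fintype.card ι := by
  rcases isEmpty_or_nonempty ι with hι | hι
  · simp
  have hk : Fintype.card ι ≠ 0 := Fintype.card_ne_zero
  have hgm := geom_mean_le_arith_mean_weighted univ (fun _ => ((Fintype.card ι : ℝ))⁻¹) z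
    (fun _ _ => by positivity) (by simp [card_univ, hk]) fun i _ => hz i
  rw [finsetProd_rpow _ _ fun i _ => hz i, ← mul_sum, inv_mul_eq_div] at hgm
  calc ∏ i, z i = ((∏ i, z i) ^ ((Fintype.card ι : ℝ))⁻¹) ^ Fintype.card ι :=
        (rpow_inv_natCast_pow (prod_nonneg fun i _ => hz i) hk).symm
    _ ≤ _ := pow_le_pow_left₀ (rpow_nonneg (prod_nonneg fun i _ => hz i) _) hgm _

section Hadamard

variable {𝕜 ι : Type*} [RCLike 𝕜] [Fintype ι] [DecidableEq ι]

open ComplexOrder in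
lemma norm_det_sq_le (M : Matrix ι ι 𝕜) :
    ‖M.det‖ ^ 2 ≤ ((∑ i, ∑ j, ‖M i j‖ ^ 2) / Fintype.card ι) ^ Fintype.card ι := by
  have hG := posSemidef_self_mul_conjTranspose M
  have hdet : ((‖M.det‖ ^ 2 : ℝ) : 𝕜) = ∏ i, (hG.1.eigenvalues i : 𝕜) := by
    rw [← hG.1.det_eq_prod_eigenvalues, det_mul, det_conjTranspose, RCLike.star_def,
      RCLike.mul_conj, RCLike.ofReal_pow]
  have htrace : ((∑ i, ∑ j, ‖M i j‖ ^ 2 : ℝ) : 𝕜) = ∑ i, (hG.1.eigenvalues i : 𝕜) := by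
    rw [← hG.1.trace_eq_sum_eigenvalues, trace]
    push_cast
    refine sum_congr rfl fun i _ => ?_
    simp [mul_apply, RCLike.mul_conj]
  rw [← RCLike.ofReal_prod, RCLike.ofReal_inj] at hdet
  rw [← RCLike.ofReal_sum, RCLike.ofReal_inj] at htrace
  rw [hdet, htrace]
  exact prod_le_sum_div_card_pow hG.eigenvalues_nonneg

lemma norm_det_sq_le_of_norm_le {M : Matrix ι ι 𝕜} {p : ℝ} (hp : ∀ i j, ‖M i j‖ ≤ p) :
    ‖M.det‖ ^ 2 ≤ (Fintype.card ι * p ^ 2) ^ Fintype.card ι := by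
  rcases isEmpty_or_nonempty ι with hι | hι
  · simp
  have hp0 : 0 ≤ p := (norm_nonneg _).trans (hp hι.some hι.some)
  refine (norm_det_sq_le M).trans (pow_le_pow_left₀ (by positivity) ?_ _)
  rw [div_le_iff₀ (by exact_mod_cast Fintype.card_pos)]
  calc ∑ i, ∑ j, ‖M i j‖ ^ 2 ≤ ∑ _i : ι, ∑ _j : ι, p ^ 2 := by
        gcongr with i _ j _
        exact hp i j
    _ = _ := by simp only [sum_const, card_univ, nsmul_eq_mul]; ring

end Hadamard

lemma det_eq_det_mul_det_geIter {n k : ℕ} (A : Matrix (Fin n) (Fin n) ℂ) (hk : k ≤ n)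
    (h : (A.submatrix (Fin.castLE (n.sub_le k)) (Fin.castLE (n.sub_le k))).det ≠ 0) :
    A.det = (A.submatrix (Fin.castLE (n.sub_le k)) (Fin.castLE (n.sub_le k))).det *
      (geIter n A k hk).det := by
  let e : Fin (n - k) ⊕ Fin k ≃ Fin n := finSumFinEquiv.trans (finCongr (Nat.sub_add_cancel hk))
  let f : Fin k → Fin n := fun i => ⟨n - k + i, by omega⟩
  let g : Fin (n - k) → Fin n := Fin.castLE (n.sub_le k)
  have hblocks : A.submatrix e e =
      fromBlocks (A.submatrix g g) (A.submatrix g f) (A.submatrix f g) (A.submatrix f f) := by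
    ext (i | i) (j | j) <;> rfl
  have : Invertible (A.submatrix g g) := invertibleOfIsUnitDet _ h.isUnit
  rw [← det_submatrix_equiv_self e A, hblocks, det_fromBlocks₁₁, invOf_eq_nonsing_inv]
  rfl

noncomputable def leadingMinorNorm (n : ℕ) (A : Matrix (Fin n) (Fin n) ℂ) (m : ℕ) : ℝ :=
  if h : m ≤ n then ‖(A.submatrix (Fin.castLE h) (Fin.castLE h)).det‖ else 0

section GaussianElimination

variable {n : ℕ} {A : Matrix (Fin n) (Fin n) ℂ}

lemma leadingMinorNorm_of_le {m : ℕ} (hm : m ≤ n) :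
    leadingMinorNorm n A m = ‖(A.submatrix (Fin.castLE hm) (Fin.castLE hm)).det‖ :=
  dif_pos hm

lemma leadingMinorNorm_self : leadingMinorNorm n A n = ‖A.det‖ := by
  simp [leadingMinorNorm]

lemma leadingMinorNorm_pos (hA : LeadingMinorsNonzero n A) {m : ℕ} (hm : m ≤ n) :
    0 < leadingMinorNorm n A m := by
  rw [leadingMinorNorm_of_le hm]
  exact norm_pos_iff.mpr (hA m hm)

/-- `A^(k)_{1,1}` is also the `1 × 1` Schur complement in the leading `(n-k+1)`-block of `A`. -/
lemma leadingMinorNorm_sub_add_one (hA : LeadingMinorsNonzero n A) {k : ℕ} (hk1 : 1 ≤ k)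
    (hk : k ≤ n) :
    leadingMinorNorm n A (n - k + 1) = leadingMinorNorm n A (n - k) * pivot n A k := by
  have hk' : n - k + 1 ≤ n := by omega
  set B := A.submatrix (Fin.castLE hk') (Fin.castLE hk')
  have hB := det_eq_det_mul_det_geIter B (by omega : 1 ≤ n - k + 1) (hA (n - k) (n.sub_le k))
  rw [leadingMinorNorm_of_le hk', leadingMinorNorm_of_le (n.sub_le k), hB, norm_mul,
    det_fin_one, pivot, dif_pos ⟨hk1, hk⟩]
  rfl

lemma prod_pivot_mul_leadingMinorNorm (hA : LeadingMinorsNonzero n A) {k : ℕ} (hk : k ≤ n) :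
    (∏ j ∈ Icc 1 k, pivot n A j) * leadingMinorNorm n A (n - k) = leadingMinorNorm n A n := by
  induction k with
  | zero => simp
  | succ k ih =>
    rw [prod_Icc_succ_top (by omega), mul_assoc, mul_comm (pivot n A _),
      ← leadingMinorNorm_sub_add_one hA (by omega) hk, (by omega : n - (k + 1) + 1 = n - k)]
    exact ih (by omega)

lemma prod_pivot_eq_norm_det_geIter (hA : LeadingMinorsNonzero n A) {k : ℕ} (hk : k ≤ n) :
    ∏ j ∈ Icc 1 k, pivot n A j = ‖(geIter n A k hk).det‖ := by
  have h := prod_pivot_mul_leadingMinorNorm hA hk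
  rw [leadingMinorNorm_self, det_eq_det_mul_det_geIter A hk (hA _ (n.sub_le k)), norm_mul,
    leadingMinorNorm_of_le (n.sub_le k), mul_comm] at h
  exact mul_left_cancel₀ (norm_pos_iff.mpr (hA _ (n.sub_le k))).ne' h

lemma pivot_pos (hA : LeadingMinorsNonzero n A) {k : ℕ} (hk1 : 1 ≤ k) (hk : k ≤ n) :
    0 < pivot n A k := by
  have h := leadingMinorNorm_pos hA (show n - k + 1 ≤ n by omega)
  rw [leadingMinorNorm_sub_add_one hA hk1 hk] at h
  exact pos_of_mul_pos_right h (leadingMinorNorm_pos hA (n.sub_le k)).le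

lemma norm_geIter_le_pivot (hA : CompletelyPivoted n A) {k : ℕ} (hk1 : 1 ≤ k) (hk : k ≤ n)
    (i j : Fin k) : ‖geIter n A k hk i j‖ ≤ pivot n A k := by
  rw [hA k hk1 hk, maxEntry]
  exact (le_ciSup (Finite.bddAbove_range _) j).trans
    (le_ciSup (Finite.bddAbove_range fun i => ⨆ j, ‖geIter n A k hk i j‖) i)

lemma two_mul_sum_log_pivot_le (hA : LeadingMinorsNonzero n A) (hcp : CompletelyPivoted n A)
    {k : ℕ} (hk1 : 1 ≤ k) (hk : k ≤ n) :
    2 * ∑ j ∈ Icc 1 k, log (pivot n A j) ≤ k * log k + 2 * k * log (pivot n A k) := by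
  have hpos : ∀ j ∈ Icc 1 k, 0 < pivot n A j := fun j hj =>
    pivot_pos hA (mem_Icc.mp hj).1 ((mem_Icc.mp hj).2.trans hk)
  have hk0 : (0 : ℝ) < k := by exact_mod_cast hk1
  have hdet := norm_det_sq_le_of_norm_le (norm_geIter_le_pivot hcp hk1 hk)
  rw [Fintype.card_fin, ← prod_pivot_eq_norm_det_geIter hA hk] at hdet
  have hlog := log_le_log (pow_pos (prod_pos hpos) 2) hdet
  rw [log_pow, log_pow, log_mul hk0.ne' (pow_pos (pivot_pos hA hk1 hk) 2).ne', log_pow,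
    log_prod fun j hj => (hpos j hj).ne'] at hlog
  push_cast at hlog
  linarith

end GaussianElimination

/-- Geometric mean growth bound for pivots: for a completely pivoted
nonsingular matrix, `p_1 / (∏_{k=1}^n p_k)^{1/n} ≤ 2 n^{(ln n)/4}`. -/
theorem geomean_pivot_bound (n : ℕ) (hn : 1 ≤ n) (A : Matrix (Fin n) (Fin n) ℂ)
    (hns : LeadingMinorsNonzero n A) (hcp : CompletelyPivoted n A) :
    pivot n A 1 / (∏ k ∈ Finset.Icc 1 n, pivot n A k) ^ ((1 : ℝ) / n) ≤
      2 * (n : ℝ) ^ (Real.log n / 4) := by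
  have hpos : ∀ k ∈ Icc 1 n, 0 < pivot n A k := fun k hk =>
    pivot_pos hns (mem_Icc.mp hk).1 (mem_Icc.mp hk).2
  have hlogs := two_mul_sub_sum_le_mul_sum_log_div (L := fun k => log (pivot n A k)) fun k hk =>
    two_mul_sum_log_pivot_le hns hcp (mem_Icc.mp hk).1 (mem_Icc.mp hk).2
  have hsum := mul_le_mul_of_nonneg_left (sum_log_div_sub_one_le n) n.cast_nonneg
  have hcard : (#(Icc 1 n) : ℝ) = n := by simp
  have hrhs : exp (log 2 + log n ^ 2 / 4) = 2 * (n : ℝ) ^ (log n / 4) := by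
    rw [exp_add, exp_log two_pos, rpow_def_of_pos (by positivity)]
    ring_nf
  rw [← hrhs, ← hcard]
  refine div_prod_rpow_le_exp (nonempty_Icc.mpr hn) hpos (hpos 1 (by simp [hn])) ?_
  rw [hcard]
  linarith
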